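/- Let H be an additive subgroup of F_q (equivalently, an F_p-submodule of F_q, so that (1,0,H) ∈ S). Then the subgroups K of AGL(1,F_q) with S(1,0,H) ≤ K are precisely the subgroups of the form S(γ^((q-1)/d1), b1, H1), where d1 | q-1, H ⊆ H1, and (γ^((q-1)/d1), b1, H1) ∈ S. -/

import Mathlib

open Matrix
open scoped Classical

abbrev GL2 (F : Type) [Field F] := GL (Fin 2) F

/-- `AGL(1,F)`: the subgroup of `GL(2,F)` of matrices of the form `[[a,b],[0,1]]`. -/
def AGL (F : Type) [Field F] : Subgroup (GL2 F) where
  carrier := {g | (g : Matrix (Fin 2) (Fin 2) F) 1 0 = 0 ∧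
                  (g : Matrix (Fin 2) (Fin 2) F) 1 1 = 1}
  one_mem' := by
    constructor <;> simp [Matrix.one_apply]
  mul_mem' := by
    rintro a b ⟨ha0, ha1⟩ ⟨hb0, hb1⟩
    constructor <;>
      simp [Units.val_mul, Matrix.mul_apply, Fin.sum_univ_two, ha0, ha1, hb0, hb1]
  inv_mem' := by
    rintro g ⟨h0, h1⟩
    have hdet : ((g : Matrix (Fin 2) (Fin 2) F) 0 0) ≠ 0 := by
      have hu : IsUnit ((g : Matrix (Fin 2) (Fin 2) F).det) :=
        (Matrix.isUnit_iff_isUnit_det _).1 g.isUnit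
      rw [Matrix.det_fin_two, h0, h1] at hu
      simpa using hu.ne_zero
    have hinv : ((g⁻¹ : GL2 F) : Matrix (Fin 2) (Fin 2) F)
        = ((g : Matrix (Fin 2) (Fin 2) F))⁻¹ := Matrix.coe_units_inv g
    constructor <;>
      simp [hinv, Matrix.inv_def, Matrix.adjugate_fin_two, Matrix.det_fin_two,
        h0, h1, hdet]

/-- Membership of a triple `(a,b,H)` in the set `𝒮`: `a ∈ F*`, `H` is an additive
subgroup of `F` closed under multiplication by the subfield `F_p(a)` generated by `a`,
and `b = 0` when `a = 1`. -/
def memS {F : Type} [Field F] (a b : F) (H : AddSubgroup F) : Prop :=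
  a ≠ 0 ∧ (a = 1 → b = 0) ∧ ∀ x ∈ Subfield.closure {a}, ∀ h ∈ H, x * h ∈ H

/-- `S(a,b,H)`: the subgroup of `GL(2,F)` generated by the matrix `[[a,b],[0,1]]`
together with the matrices `[[1,h],[0,1]]`, `h ∈ H`. -/
def Sgrp {F : Type} [Field F] (a b : F) (H : AddSubgroup F) : Subgroup (GL2 F) :=
  Subgroup.closure {g : GL2 F |
    (g : Matrix (Fin 2) (Fin 2) F) = !![a, b; 0, 1] ∨
    ∃ h ∈ H, (g : Matrix (Fin 2) (Fin 2) F) = !![1, h; 0, 1]}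

/-- `pPow p d` is `p(d)`: the smallest (positive) power of `p` that is `≡ 1 (mod d)`. -/
noncomputable def pPow (p d : ℕ) : ℕ := sInf {m | (∃ k : ℕ, 1 ≤ k ∧ m = p ^ k) ∧ m % d = 1 % d}

/-! The linear parts `det K` of a subgroup `K ≤ AGL(1, F)` form a subgroup of the cyclic group
`Fˣ = ⟨γ⟩`, hence equal `⟨a⟩` with `a = γ^((q-1)/d)`, `d ∣ q - 1`. Fix `[[a,b],[0,1]] ∈ K` (with
`b = 0` if `a = 1`). Every `g ∈ K` differs from a power of it by an element of `K` with linear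
part `1`, i.e. a translation in `K`; so `K = S(a, b, T)` for the group `T` of translations of `K`.
Conjugating translations by `[[a,b],[0,1]]` shows `a T ⊆ T`, and in a finite field this already
gives closure of `T` under `F_p(a)`, since inverses are powers. -/

open Subgroup Matrix.GeneralLinearGroup

theorem zpowers_pow_eq_zpowers_pow_gcd {G : Type*} [Group G] (g : G) (n : ℕ) :
    zpowers (g ^ n) = zpowers (g ^ n.gcd (orderOf g)) := by
  apply le_antisymm
  · obtain ⟨k, hk⟩ := Nat.gcd_dvd_left n (orderOf g)
    have hpow : g ^ n = (g ^ n.gcd (orderOf g)) ^ k := by rw [← pow_mul, ← hk]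
    exact zpowers_le_of_mem (hpow ▸ npow_mem_zpowers _ k)
  · refine zpowers_le_of_mem ?_
    -- Bézout: `gcd n (orderOf g) = n * A + orderOf g * B`, and `g ^ orderOf g = 1`.
    rw [← zpow_natCast g (n.gcd _), Nat.gcd_eq_gcd_ab, _root_.zpow_add, _root_.zpow_mul,
      _root_.zpow_mul, zpow_natCast, zpow_natCast, pow_orderOf_eq_one, _root_.one_zpow, mul_one]
    exact zpow_mem_zpowers _ _

theorem exists_dvd_orderOf_eq_zpowers_pow_div {G : Type*} [Group G] [Finite G] {g : G}
    {A : Subgroup G} (hA : A ≤ zpowers g) :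
    ∃ d, d ∣ orderOf g ∧ A = zpowers (g ^ (orderOf g / d)) := by
  obtain ⟨n, rfl⟩ := (le_zpowers_iff g A).1 hA
  have hdvd := Nat.gcd_dvd_right n (orderOf g)
  refine ⟨orderOf g / n.gcd (orderOf g), Nat.div_dvd_of_dvd hdvd, ?_⟩
  rw [Nat.div_div_self hdvd (orderOf_pos g).ne', zpowers_pow_eq_zpowers_pow_gcd]

theorem Subring.inv_mem_of_fintype {F : Type*} [Field F] [Fintype F] (S : Subring F) {x : F}
    (hx : x ∈ S) : x⁻¹ ∈ S := by
  rcases eq_or_ne x 0 with rfl | hx0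
  · simp
  have hcard : 2 ≤ Fintype.card F := Fintype.one_lt_card
  have hinv : x⁻¹ = x ^ (Fintype.card F - 2) := by
    refine inv_eq_of_mul_eq_one_left ?_
    rw [← pow_succ, show Fintype.card F - 2 + 1 = Fintype.card F - 1 by omega]
    exact FiniteField.pow_card_sub_one_eq_one x hx0
  exact hinv ▸ pow_mem hx _

def AddSubgroup.multiplierSubring {F : Type*} [CommRing F] (H : AddSubgroup F) : Subring F where
  carrier := {x | ∀ h ∈ H, x * h ∈ H}
  one_mem' h hh := by simpa using hh
  mul_mem' hx hy h hh := by simpa [mul_assoc] using hx _ (hy h hh)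
  zero_mem' h _ := by simp
  add_mem' hx hy h hh := by simpa [add_mul] using H.add_mem (hx h hh) (hy h hh)
  neg_mem' hx h hh := by simpa using H.neg_mem (hx h hh)

theorem AddSubgroup.mul_mem_of_mem_subfieldClosure {F : Type*} [Field F] [Fintype F]
    {H : AddSubgroup F} {a : F} (ha : ∀ h ∈ H, a * h ∈ H) :
    ∀ x ∈ Subfield.closure {a}, ∀ h ∈ H, x * h ∈ H := fun x hx => by
  let M := H.multiplierSubring.toSubfield fun _ => H.multiplierSubring.inv_mem_of_fintype
  exact (Subfield.closure_le (t := M)).2 (Set.singleton_subset_iff.2 ha) hx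

section Affine

variable {F : Type} [Field F]

def affineGL (a : Fˣ) (b : F) : GL2 F :=
  mkOfDetNeZero !![(a : F), b; 0, 1] (by simp [Matrix.det_fin_two_of])

@[simp] theorem coe_affineGL (a : Fˣ) (b : F) :
    (affineGL a b : Matrix (Fin 2) (Fin 2) F) = !![(a : F), b; 0, 1] := rfl

theorem affineGL_mul (a c : Fˣ) (b d : F) :
    affineGL a b * affineGL c d = affineGL (a * c) (a * d + b) := by
  ext i j
  fin_cases i <;> fin_cases j <;> simp [Matrix.mul_apply, Fin.sum_univ_two]

@[simp] theorem affineGL_one_zero : affineGL (1 : Fˣ) (0 : F) = 1 := by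
  ext i j
  fin_cases i <;> fin_cases j <;> simp

theorem affineGL_inv (a : Fˣ) (b : F) : (affineGL a b)⁻¹ = affineGL a⁻¹ (-(a⁻¹ * b : F)) :=
  inv_eq_of_mul_eq_one_right <| by simp [affineGL_mul]

@[simp] theorem det_affineGL (a : Fˣ) (b : F) : det (affineGL a b) = a := by
  ext
  simp [Matrix.det_fin_two_of]

theorem eq_affineGL_of_mem_AGL {g : GL2 F} (hg : g ∈ AGL F) :
    g = affineGL (det g) ((g : Matrix (Fin 2) (Fin 2) F) 0 1) := by
  obtain ⟨h10, h11⟩ := hg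
  ext i j
  fin_cases i <;> fin_cases j <;> simp [h10, h11, Matrix.det_fin_two]

theorem affineGL_mem_Sgrp (a : Fˣ) (b : F) (H : AddSubgroup F) :
    affineGL a b ∈ Sgrp (a : F) b H :=
  Subgroup.subset_closure (Or.inl (coe_affineGL a b))

theorem affineGL_one_mem_Sgrp (a b : F) {H : AddSubgroup F} {h : F} (hh : h ∈ H) :
    affineGL 1 h ∈ Sgrp a b H :=
  Subgroup.subset_closure (Or.inr ⟨h, hh, by simp⟩)

theorem Sgrp_le_iff {a : Fˣ} {b : F} {H : AddSubgroup F} {K : Subgroup (GL2 F)} :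
    Sgrp (a : F) b H ≤ K ↔ affineGL a b ∈ K ∧ ∀ h ∈ H, affineGL 1 h ∈ K := by
  refine ⟨fun hK => ⟨hK (affineGL_mem_Sgrp a b H), fun h hh => hK (affineGL_one_mem_Sgrp _ _ hh)⟩,
    fun ⟨hab, hH⟩ => (closure_le K).2 ?_⟩
  rintro g (hg | ⟨h, hh, hg⟩)
  · exact (Units.ext (hg.trans (coe_affineGL a b).symm) : g = _) ▸ hab
  · exact (Units.ext (hg.trans (coe_affineGL 1 h).symm) : g = _) ▸ hH h hh

theorem Sgrp_le_AGL (a b : F) (H : AddSubgroup F) : Sgrp a b H ≤ AGL F := by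
  refine (closure_le _).2 ?_
  rintro g (hg | ⟨h, -, hg⟩) <;> exact ⟨by simp [hg], by simp [hg]⟩

def translations (K : Subgroup (GL2 F)) : AddSubgroup F where
  carrier := {h | affineGL 1 h ∈ K}
  zero_mem' := by simp [one_mem]
  add_mem' {x y} (hx : affineGL 1 x ∈ K) (hy : affineGL 1 y ∈ K) := by
    simpa [affineGL_mul, add_comm] using mul_mem hx hy
  neg_mem' {x} (hx : affineGL 1 x ∈ K) := by
    simpa [affineGL_inv] using inv_mem hx

theorem mem_translations {K : Subgroup (GL2 F)} {h : F} :
    h ∈ translations K ↔ affineGL 1 h ∈ K := Iff.rfl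

theorem le_translations_Sgrp (a b : F) (H : AddSubgroup F) : H ≤ translations (Sgrp a b H) :=
  fun _ => affineGL_one_mem_Sgrp a b

theorem Sgrp_one_zero_le_iff {H : AddSubgroup F} {K : Subgroup (GL2 F)} :
    Sgrp 1 0 H ≤ K ↔ H ≤ translations K := by
  rw [← Units.val_one, Sgrp_le_iff, affineGL_one_zero]
  exact and_iff_right (one_mem K)

theorem affineGL_mul_affineGL_one_mul_inv (a : Fˣ) (b h : F) :
    affineGL a b * affineGL 1 h * (affineGL a b)⁻¹ = affineGL 1 (a * h) := by
  rw [affineGL_inv, affineGL_mul, affineGL_mul]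
  congr 1
  · simp
  · simp only [mul_one]
    rw [mul_neg, ← mul_assoc, Units.mul_inv]
    ring

theorem mul_mem_translations {K : Subgroup (GL2 F)} {a : Fˣ} {b h : F} (hab : affineGL a b ∈ K)
    (hh : h ∈ translations K) : (a : F) * h ∈ translations K := by
  rw [mem_translations, ← affineGL_mul_affineGL_one_mul_inv a b]
  exact mul_mem (mul_mem hab hh) (inv_mem hab)

theorem eq_Sgrp_translations {K : Subgroup (GL2 F)} (hKA : K ≤ AGL F) {a : Fˣ} {b : F}
    (hab : affineGL a b ∈ K) (hdet : K.map det = zpowers a) :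
    K = Sgrp (a : F) b (translations K) := by
  refine le_antisymm (fun g hg => ?_) (Sgrp_le_iff.2 ⟨hab, fun _ hh => hh⟩)
  obtain ⟨k, hk⟩ : det g ∈ zpowers a := hdet ▸ mem_map_of_mem _ hg
  set t := g * (affineGL a b ^ k)⁻¹
  have ht : t ∈ K := mul_mem hg (inv_mem (zpow_mem hab k))
  have ht_det : det t = 1 := by simp [t, ← hk]
  have ht_eq : t = affineGL 1 ((t : Matrix (Fin 2) (Fin 2) F) 0 1) :=
    ht_det ▸ eq_affineGL_of_mem_AGL (hKA ht)
  have hg_eq : g = t * affineGL a b ^ k := by simp [t]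
  rw [hg_eq]
  refine mul_mem ?_ (zpow_mem (affineGL_mem_Sgrp a b _) k)
  rw [ht_eq]
  exact affineGL_one_mem_Sgrp _ _ (mem_translations.2 (ht_eq ▸ ht))

theorem exists_memS_eq_Sgrp [Fintype F] {K : Subgroup (GL2 F)} (hKA : K ≤ AGL F) {a : Fˣ}
    (hdet : K.map det = zpowers a) :
    ∃ b, memS (a : F) b (translations K) ∧ K = Sgrp (a : F) b (translations K) := by
  obtain ⟨b, hb, hab⟩ : ∃ b : F, (a = 1 → b = 0) ∧ affineGL a b ∈ K := by
    by_cases ha : a = 1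
    · exact ⟨0, fun _ => rfl, ha ▸ affineGL_one_zero (F := F) ▸ one_mem K⟩
    obtain ⟨g, hg, hga⟩ := (hdet ▸ mem_zpowers a : a ∈ K.map det)
    exact ⟨_, fun h => absurd h ha, hga ▸ eq_affineGL_of_mem_AGL (hKA hg) ▸ hg⟩
  have hclosed := AddSubgroup.mul_mem_of_mem_subfieldClosure fun _ hh => mul_mem_translations hab hh
  exact ⟨b, ⟨a.ne_zero, fun h => hb (Units.val_eq_one.1 h), hclosed⟩,
    eq_Sgrp_translations hKA hab hdet⟩

end Affine

/-- For an additive subgroup `H` of `F_q` (so `(1,0,H) ∈ 𝒮`), the subgroups of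
`AGL(1,F_q)` containing `S(1,0,H)` are precisely the `S(γ^((q-1)/d₁),b₁,H₁)` with
`d₁ ∣ q-1`, `H ⊆ H₁`, and `(γ^((q-1)/d₁),b₁,H₁) ∈ 𝒮`. -/
theorem stmt10 (F : Type) [Field F] [Fintype F] (q : ℕ) (hq : Fintype.card F = q)
    (γ : F) (hγ0 : γ ≠ 0) (hγ : ∀ x : F, x ≠ 0 → ∃ k : ℕ, x = γ ^ k)
    (H : AddSubgroup F) (K : Subgroup (GL2 F)) :
    (Sgrp (1 : F) 0 H ≤ K ∧ K ≤ AGL F) ↔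
      ∃ (d1 : ℕ) (b1 : F) (H1 : AddSubgroup F), d1 ∣ q - 1 ∧ H ≤ H1 ∧
        memS (γ ^ ((q - 1) / d1)) b1 H1 ∧ K = Sgrp (γ ^ ((q - 1) / d1)) b1 H1 := by
  constructor
  · rintro ⟨hSK, hKA⟩
    set γu := Units.mk0 γ hγ0
    have hgen : ∀ x : Fˣ, x ∈ zpowers γu := fun x => by
      obtain ⟨k, hk⟩ := hγ x x.ne_zero
      exact ⟨k, Units.ext (by simp [γu, hk])⟩
    have horder : orderOf γu = q - 1 := by
      rw [orderOf_eq_card_of_forall_mem_zpowers hgen, Nat.card_eq_fintype_card,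
        Fintype.card_units, hq]
    obtain ⟨d1, hd1, hdet⟩ :=
      exists_dvd_orderOf_eq_zpowers_pow_div (fun x _ => hgen x : K.map det ≤ zpowers γu)
    obtain ⟨b1, hmemS, hK⟩ := exists_memS_eq_Sgrp hKA hdet
    have hcoe : ((γu ^ (orderOf γu / d1) : Fˣ) : F) = γ ^ ((q - 1) / d1) := by simp [γu, horder]
    exact ⟨d1, b1, translations K, horder ▸ hd1, Sgrp_one_zero_le_iff.1 hSK, hcoe ▸ hmemS,
      hcoe ▸ hK⟩
  · rintro ⟨d1, b1, H1, -, hHH1, -, rfl⟩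
    exact ⟨Sgrp_one_zero_le_iff.2 (hHH1.trans (le_translations_Sgrp _ _ _)), Sgrp_le_AGL _ _ _⟩
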